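/- For every odd integer n ≥ 5, the placement of 9 queens on the n×n board at the squares (1,1), (1,n), (n,1), (n,n), (1,(n+1)/2), ((n+1)/2,1), (n,(n+1)/2), ((n+1)/2,n), and ((n+1)/2,(n+1)/2) attacks at most 10n squares in total. -/

import Mathlib

/-- The n×n board: squares (x,y) ∈ ℤ×ℤ with 1 ≤ x ≤ n and 1 ≤ y ≤ n. -/
noncomputable def board (n : ℕ) : Finset (ℤ × ℤ) := Finset.Icc 1 (n : ℤ) ×ˢ Finset.Icc 1 (n : ℤ)

/-- A line of the board: a row (fixed y), a column (fixed x), a positive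
diagonal (fixed x − y), or a negative diagonal (fixed x + y). -/
inductive Line : Type where
  | row : ℤ → Line
  | col : ℤ → Line
  | posDiag : ℤ → Line
  | negDiag : ℤ → Line
deriving DecidableEq

/-- The defining condition for a point to be on a given line. -/
def Line.pred : Line → ℤ × ℤ → Prop
  | .row b, p => p.2 = b
  | .col a, p => p.1 = a
  | .posDiag d, p => p.1 - p.2 = d
  | .negDiag s, p => p.1 + p.2 = s

instance (L : Line) (p : ℤ × ℤ) : Decidable (L.pred p) :=
  match L with
  | .row b => inferInstanceAs (Decidable (p.2 = b))
  | .col a => inferInstanceAs (Decidable (p.1 = a))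
  | .posDiag d => inferInstanceAs (Decidable (p.1 - p.2 = d))
  | .negDiag s => inferInstanceAs (Decidable (p.1 + p.2 = s))

/-- The set of squares of the n×n board lying on a line. -/
noncomputable def Line.squares (n : ℕ) (L : Line) : Finset (ℤ × ℤ) := (board n).filter L.pred

/-- The length of a line: its number of board squares. -/
noncomputable def Line.length (n : ℕ) (L : Line) : ℕ := (L.squares n).card

/-- Whether a line is a diagonal (of either orientation). -/
def Line.isDiag : Line → Prop
  | .posDiag _ => True
  | .negDiag _ => True
  | _ => False

/-- The set of board squares attacked by a placement S of queens: squares q on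
the board such that some queen p ∈ S with p ≠ q shares a row, column, or
diagonal with q. -/
noncomputable def attacked (n : ℕ) (S : Finset (ℤ × ℤ)) : Finset (ℤ × ℤ) :=
  S.biUnion fun p => (board n).filter fun q =>
    q ≠ p ∧ (p.1 = q.1 ∨ p.2 = q.2 ∨ p.1 - p.2 = q.1 - q.2 ∨ p.1 + p.2 = q.1 + q.2)

/-- G(m) = ⌊m²/12⌋ + 1 if m ≡ 3, 6, 9 (mod 12) or m = 10; ⌊m²/12⌋ otherwise. -/
def G (m : ℕ) : ℕ :=
  if m % 12 = 3 ∨ m % 12 = 6 ∨ m % 12 = 9 ∨ m = 10 then m ^ 2 / 12 + 1 else m ^ 2 / 12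

/-!
The nine queens form the grid `T ×ˢ T` with `T = {1, (n + 1) / 2, n}`. A square attacked by
them lies on one of the three rows or three columns through `T` (together `6n - 9` squares) or
on a diagonal through a queen. Those diagonals are the two long diagonals (`n` squares each),
four diagonals joining midpoints of adjacent sides (`(n + 1) / 2` squares each) and four corner
diagonals of one square each, so at most `(6n - 9) + 2n + 4 (n + 1) / 2 + 4 = 10n - 3` squares
are attacked.
-/

open Finset Pointwise

lemma mem_board {n : ℕ} {q : ℤ × ℤ} :
    q ∈ board n ↔ (1 ≤ q.1 ∧ q.1 ≤ n) ∧ 1 ≤ q.2 ∧ q.2 ≤ n := by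
  simp only [board, mem_product, mem_Icc]

namespace Line

lemma mem_squares {n : ℕ} {L : Line} {q : ℤ × ℤ} : q ∈ L.squares n ↔ q ∈ board n ∧ L.pred q :=
  mem_filter

lemma length_posDiag_le (n : ℕ) (d : ℤ) : (posDiag d).length n ≤ n - d.natAbs := by
  have h := card_le_card_of_injOn Prod.fst (s := (posDiag d).squares n)
    (t := Icc (max 1 (1 + d)) (min n (n + d))) ?_ ?_
  · rw [Int.card_Icc] at h
    unfold length
    omega
  · intro q hq
    simp only [mem_coe, mem_squares, mem_board, pred, mem_Icc] at hq ⊢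
    omega
  · intro q hq q' hq' h
    simp only [mem_coe, mem_squares, pred] at hq hq'
    ext <;> omega

lemma length_negDiag_le (n : ℕ) (s : ℤ) : (negDiag s).length n ≤ n - (s - (n + 1)).natAbs := by
  have h := card_le_card_of_injOn Prod.fst (s := (negDiag s).squares n)
    (t := Icc (max 1 (s - n)) (min n (s - 1))) ?_ ?_
  · rw [Int.card_Icc] at h
    unfold length
    omega
  · intro q hq
    simp only [mem_coe, mem_squares, mem_board, pred, mem_Icc] at hq ⊢
    omega
  · intro q hq q' hq' h
    simp only [mem_coe, mem_squares, pred] at hq hq'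
    ext <;> omega

end Line

open Line

theorem Finset.card_product_union_product_add_card_mul {α : Type*} [DecidableEq α]
    {s t : Finset α} (h : t ⊆ s) : #(t ×ˢ s ∪ s ×ˢ t) + #t * #t = 2 * (#t * #s) := by
  have hinter : t ×ˢ s ∩ s ×ˢ t = t ×ˢ t := by
    rw [product_inter_product, inter_eq_left.2 h, inter_eq_right.2 h]
  rw [← card_product, ← hinter, card_union_add_card_inter, card_product, card_product,
    mul_comm #s]
  ring

theorem Finset.sum_insert_le_add {ι M : Type*} [DecidableEq ι] [AddCommMonoid M] [PartialOrder M]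
    [CanonicallyOrderedAdd M] (f : ι → M) (a : ι) (s : Finset ι) :
    ∑ x ∈ insert a s, f x ≤ f a + ∑ x ∈ s, f x := by
  by_cases ha : a ∈ s
  · rw [insert_eq_of_mem ha]
    exact le_add_self
  · rw [sum_insert ha]

theorem attacked_product_self_subset (n : ℕ) (T : Finset ℤ) :
    attacked n (T ×ˢ T) ⊆ (T ×ˢ Icc 1 (n : ℤ) ∪ Icc 1 (n : ℤ) ×ˢ T)
      ∪ (T - T).biUnion (fun d => (posDiag d).squares n)
      ∪ (T + T).biUnion (fun s => (negDiag s).squares n) := by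
  intro q hq
  simp only [attacked, mem_biUnion, mem_filter] at hq
  obtain ⟨⟨a, b⟩, hab, hq, -, hline⟩ := hq
  rw [mem_product] at hab
  have hq' := mem_board.1 hq
  simp only [mem_union, mem_product, mem_biUnion, mem_squares, mem_Icc, pred]
  rcases hline with h | h | h | h
  · exact .inl (.inl (.inl ⟨h ▸ hab.1, hq'.2⟩))
  · exact .inl (.inl (.inr ⟨hq'.1, h ▸ hab.2⟩))
  · exact .inl (.inr ⟨a - b, sub_mem_sub hab.1 hab.2, hq, h.symm⟩)
  · exact .inr ⟨a + b, add_mem_add hab.1 hab.2, hq, h.symm⟩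

theorem card_attacked_product_self_le (n : ℕ) (T : Finset ℤ) :
    #(attacked n (T ×ˢ T)) ≤ #(T ×ˢ Icc 1 (n : ℤ) ∪ Icc 1 (n : ℤ) ×ˢ T)
      + ∑ d ∈ T - T, (n - d.natAbs) + ∑ s ∈ T + T, (n - (s - (n + 1)).natAbs) := by
  grw [attacked_product_self_subset, card_union_le, card_union_le, card_biUnion_le,
    card_biUnion_le]
  gcongr with d _ s _
  · exact length_posDiag_le n d
  · exact length_negDiag_le n s

def endsAndMiddle (n : ℕ) : Finset ℤ := {1, ((n : ℤ) + 1) / 2, (n : ℤ)}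

section EndsAndMiddle

variable {n : ℕ}

theorem endsAndMiddle_product_self : endsAndMiddle n ×ˢ endsAndMiddle n =
    {((1 : ℤ), (1 : ℤ)), (1, (n : ℤ)), ((n : ℤ), 1), ((n : ℤ), (n : ℤ)),
      (1, ((n : ℤ) + 1) / 2), (((n : ℤ) + 1) / 2, 1), ((n : ℤ), ((n : ℤ) + 1) / 2),
      (((n : ℤ) + 1) / 2, (n : ℤ)), (((n : ℤ) + 1) / 2, ((n : ℤ) + 1) / 2)} := by
  ext ⟨x, y⟩
  simp only [endsAndMiddle, mem_insert, mem_singleton, mem_product, Prod.mk.injEq]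
  tauto

theorem card_endsAndMiddle (hn : 3 ≤ n) : #(endsAndMiddle n) = 3 :=
  card_eq_three.2 ⟨1, ((n : ℤ) + 1) / 2, (n : ℤ), by omega, by omega, by omega, rfl⟩

theorem endsAndMiddle_subset_Icc (hn : 0 < n) : endsAndMiddle n ⊆ Icc 1 (n : ℤ) := by
  intro x hx
  simp only [endsAndMiddle, mem_insert, mem_singleton] at hx
  rw [mem_Icc]
  omega

theorem card_endsAndMiddle_rows_union_cols (hn : 3 ≤ n) :
    #(endsAndMiddle n ×ˢ Icc 1 (n : ℤ) ∪ Icc 1 (n : ℤ) ×ˢ endsAndMiddle n) + 9 = 6 * n := by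
  have h := card_product_union_product_add_card_mul (endsAndMiddle_subset_Icc (by omega : 0 < n))
  rw [card_endsAndMiddle hn, Int.card_Icc] at h
  omega

theorem sum_posDiag_endsAndMiddle_le (hn : Odd n) :
    ∑ d ∈ endsAndMiddle n - endsAndMiddle n, (n - d.natAbs) ≤ 2 * n + 3 := by
  obtain ⟨k, rfl⟩ := hn
  have hsub : endsAndMiddle (2 * k + 1) - endsAndMiddle (2 * k + 1)
      ⊆ {0, (k : ℤ), -(k : ℤ), 2 * (k : ℤ), -(2 * (k : ℤ))} := by
    intro d hd
    obtain ⟨a, ha, b, hb, rfl⟩ := mem_sub.1 hd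
    simp only [endsAndMiddle, mem_insert, mem_singleton] at ha hb ⊢
    omega
  grw [sum_le_sum_of_subset hsub, sum_insert_le_add, sum_insert_le_add, sum_insert_le_add,
    sum_insert_le_add, sum_singleton]
  omega

theorem sum_negDiag_endsAndMiddle_le (hn : Odd n) :
    ∑ s ∈ endsAndMiddle n + endsAndMiddle n, (n - (s - (n + 1)).natAbs) ≤ 2 * n + 3 := by
  obtain ⟨k, rfl⟩ := hn
  have hsub : endsAndMiddle (2 * k + 1) + endsAndMiddle (2 * k + 1)
      ⊆ {2, (k : ℤ) + 2, 2 * (k : ℤ) + 2, 3 * (k : ℤ) + 2, 4 * (k : ℤ) + 2} := by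
    intro s hs
    obtain ⟨a, ha, b, hb, rfl⟩ := mem_add.1 hs
    simp only [endsAndMiddle, mem_insert, mem_singleton] at ha hb ⊢
    omega
  grw [sum_le_sum_of_subset hsub, sum_insert_le_add, sum_insert_le_add, sum_insert_le_add,
    sum_insert_le_add, sum_singleton]
  omega

end EndsAndMiddle

/-- For every odd n ≥ 5, the nine queens at the corners, the
middles of the sides, and the center of the n×n board attack at most 10·n
squares. -/
theorem nine_queens_attack_at_most_ten_n (n : ℕ) (hodd : Odd n) (hn : 5 ≤ n) :
    (attacked n ({((1 : ℤ), (1 : ℤ)), (1, (n : ℤ)), ((n : ℤ), 1), ((n : ℤ), (n : ℤ)),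
        (1, ((n : ℤ) + 1) / 2), (((n : ℤ) + 1) / 2, 1),
        ((n : ℤ), ((n : ℤ) + 1) / 2), (((n : ℤ) + 1) / 2, (n : ℤ)),
        (((n : ℤ) + 1) / 2, ((n : ℤ) + 1) / 2)} : Finset (ℤ × ℤ))).card
      ≤ 10 * n := by
  rw [← endsAndMiddle_product_self]
  have hrowscols := card_endsAndMiddle_rows_union_cols (n := n) (by omega)
  grw [card_attacked_product_self_le, sum_posDiag_endsAndMiddle_le hodd,
    sum_negDiag_endsAndMiddle_le hodd]
  omega
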